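/- Let F = 𝔽_q be a finite field, K = 𝔽_{q^m} a degree-m extension, and G a finite group. Let C ≤ KG be a left FG-submodule of the group algebra KG. Then C is TE-LCD (i.e. C ∩ C^⊥_TE = {0}, where the orthogonal is taken with respect to the trace-Euclidean form) if and only if there exists an FG-linear endomorphism P of KG with P² = P, Im(P) = C, and ⟨P x, y⟩_TE = ⟨x, P y⟩_TE for all x, y ∈ KG (P is self-adjoint with respect to the trace-Euclidean form). -/

import Mathlib

open MonoidAlgebra

/-- The trace-Euclidean form on the group algebra `KG`:
`⟨x,y⟩_TE = Tr_{K/F}(Σ_{g∈G} x_g y_g)`. -/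
noncomputable def TE (F : Type) {K G : Type} [Field F] [Field K] [Algebra F K]
    [Fintype G] (x y : MonoidAlgebra K G) : F :=
  Algebra.trace F K (∑ g : G, x.coeff g * y.coeff g)

/-- The involution of `KG` induced by inversion in `G`:
`(Σ a_g g)* = Σ a_g g⁻¹`, i.e. the coefficient of `g` in `a*` is `a (g⁻¹)`. -/
def starG {K G : Type} [Semiring K] [Group G] (a : MonoidAlgebra K G) : MonoidAlgebra K G :=
  MonoidAlgebra.ofCoeff (Finsupp.equivMapDomain (Equiv.inv G) a.coeff)

/-- The coefficientwise embedding of the group algebra `FG` into `KG`. -/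
noncomputable def fgMap (F K G : Type) [Field F] [Field K] [Algebra F K] [Group G] :
    MonoidAlgebra F G →ₐ[F] MonoidAlgebra K G :=
  MonoidAlgebra.lift F (MonoidAlgebra K G) G (MonoidAlgebra.of K G)

/-- `KG` as a left `FG`-module via the coefficientwise embedding `FG ⊆ KG`
followed by left multiplication. -/
noncomputable instance fgModule (F K G : Type) [Field F] [Field K] [Algebra F K] [Group G] :
    Module (MonoidAlgebra F G) (MonoidAlgebra K G) :=
  Module.compHom _ (fgMap F K G).toRingHom

/-!
For `a ∈ FG` one has `TE(a x, y) = TE(x, a* y)` with `a* = starG a`, so the trace-Euclidean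
orthogonal `C^⊥` of an `FG`-submodule is again an `FG`-submodule; and since `K/F` is separable,
`TE` is a nondegenerate symmetric `F`-bilinear form. If `C ∩ C^⊥ = 0`, finite dimensionality gives
`KG = C ⊕ C^⊥`, and the projection onto `C` along `C^⊥` is `FG`-linear and self-adjoint because
its range and kernel are orthogonal. Conversely, if `P` is a self-adjoint projector onto `C` and
`x ∈ C ∩ C^⊥`, then `TE(x, y) = TE(P x, y) = TE(x, P y) = 0` for every `y`, so `x = 0`.
-/

namespace LinearMap.BilinForm

variable {R F M : Type*} [Ring R] [CommRing F] [AddCommGroup M] [Module R M] [Module F M]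
  (B : LinearMap.BilinForm F M)

lemma apply_projection_left_eq_right (hB : B.IsSymm) {p q : Submodule R M} (hpq : IsCompl p q)
    (horth : ∀ x ∈ p, ∀ y ∈ q, B x y = 0) (x y : M) :
    B (p.projection q hpq x) y = B x (p.projection q hpq y) := by
  set P := p.projection q hpq
  calc B (P x) y = B (P x) (P y) + B (P x) (y - P y) := by rw [← map_add, add_sub_cancel]
    _ = B (P x) (P y) + B (P y) (x - P x) := by
      rw [horth _ (p.projection_apply_mem hpq x) _ (p.sub_projection_mem hpq y),
        horth _ (p.projection_apply_mem hpq y) _ (p.sub_projection_mem hpq x)]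
    _ = B x (P y) := by rw [hB.eq (P y), ← LinearMap.add_apply, ← map_add, add_sub_cancel]

lemma eq_zero_of_mem_range_of_orthogonal_range (hB : B.SeparatingLeft) {P : M →ₗ[R] M}
    (hP : IsIdempotentElem P) (hadj : ∀ x y, B (P x) y = B x (P y)) {x : M}
    (hx : x ∈ LinearMap.range P) (horth : ∀ c ∈ LinearMap.range P, B x c = 0) : x = 0 :=
  hB x fun w => by
    rw [← (LinearMap.IsIdempotentElem.mem_range_iff hP).1 hx, hadj,
      horth _ (LinearMap.mem_range_self P w)]

end LinearMap.BilinForm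

section TraceEuclideanForm

variable (F : Type) {K G : Type} [Field F] [Field K] [Algebra F K] [Fintype G]

lemma TE_comm (x y : MonoidAlgebra K G) : TE F x y = TE F y x := by
  simp only [TE, mul_comm]

noncomputable def teForm : LinearMap.BilinForm F (MonoidAlgebra K G) :=
  LinearMap.mk₂ F (TE F)
    (fun _ _ _ => by simp [TE, add_mul, Finset.sum_add_distrib])
    (fun _ _ _ => by simp [TE, Finset.mul_sum])
    (fun _ _ _ => by simp [TE, mul_add, Finset.sum_add_distrib])
    (fun _ _ _ => by simp [TE, Finset.mul_sum])

@[simp]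
lemma teForm_apply (x y : MonoidAlgebra K G) : teForm F x y = TE F x y := rfl

lemma teForm_isSymm : (teForm F : LinearMap.BilinForm F (MonoidAlgebra K G)).IsSymm :=
  ⟨fun x y => TE_comm F x y⟩

lemma TE_single_right (x : MonoidAlgebra K G) (g : G) (c : K) :
    TE F x (single g c) = Algebra.trace F K (x.coeff g * c) := by
  classical
  rw [TE, Finset.sum_eq_single g (fun h _ hne => by simp [coeff_single, hne.symm]) (by simp)]
  simp [coeff_single]

lemma teForm_separatingLeft [FiniteDimensional F K] [Algebra.IsSeparable F K] :
    (teForm F : LinearMap.BilinForm F (MonoidAlgebra K G)).SeparatingLeft := by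
  intro x hx
  ext g
  refine (traceForm_nondegenerate F K).1 (x.coeff g) fun c => ?_
  simpa [TE_single_right] using hx (single g c)

end TraceEuclideanForm

section StarG

variable {R G : Type} [Semiring R] [Group G]

@[simp]
lemma coeff_starG (a : MonoidAlgebra R G) (g : G) : (starG a).coeff g = a.coeff g⁻¹ := rfl

@[simp]
lemma starG_zero : starG (0 : MonoidAlgebra R G) = 0 := rfl

lemma starG_add (a b : MonoidAlgebra R G) : starG (a + b) = starG a + starG b := by
  ext g
  simp

@[simp]
lemma starG_single (g : G) (r : R) : starG (single g r) = single g⁻¹ r := by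
  classical
  ext h
  simp [Finsupp.single_apply, inv_eq_iff_eq_inv]

end StarG

section GroupAlgebraAction

variable (F : Type) {K G : Type} [Field F] [Field K] [Algebra F K] [Group G]

instance : IsScalarTower F (MonoidAlgebra F G) (MonoidAlgebra K G) :=
  ⟨fun c a x => by
    show fgMap F K G (c • a) * x = c • (fgMap F K G a * x)
    rw [map_smul, smul_mul_assoc]⟩

lemma single_smul_eq_single_mul (g : G) (c : F) (x : MonoidAlgebra K G) :
    (single g c : MonoidAlgebra F G) • x = single g (algebraMap F K c) * x := by
  show fgMap F K G (single g c) * x = _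
  simp [fgMap, MonoidAlgebra.lift_single, MonoidAlgebra.smul_single,
    Algebra.algebraMap_eq_smul_one]

variable [Fintype G]

lemma TE_single_mul (g : G) (k : K) (x y : MonoidAlgebra K G) :
    TE F (single g k * x) y = TE F x (single g⁻¹ k * y) := by
  unfold TE
  congr 1
  refine Fintype.sum_equiv (Equiv.mulLeft g⁻¹) _ _ fun h => ?_
  simp only [Equiv.coe_mulLeft, coeff_single_mul_apply, inv_inv, mul_inv_cancel_left]
  ring

lemma TE_smul_left (a : MonoidAlgebra F G) (x y : MonoidAlgebra K G) :
    TE F (a • x) y = TE F x (starG a • y) := by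
  induction a using MonoidAlgebra.induction_linear with
  | zero => simp [TE]
  | add a b ha hb =>
    simpa only [starG_add, add_smul, ← teForm_apply, map_add, LinearMap.add_apply] using
      congrArg₂ (· + ·) ha hb
  | single g c => simp only [starG_single, single_smul_eq_single_mul, TE_single_mul]

def teOrthogonal (C : Submodule (MonoidAlgebra F G) (MonoidAlgebra K G)) :
    Submodule (MonoidAlgebra F G) (MonoidAlgebra K G) where
  carrier := {x | ∀ c ∈ C, TE F x c = 0}
  add_mem' {x y} hx hy c hc := by
    change teForm F (x + y) c = 0
    rw [map_add, LinearMap.add_apply, teForm_apply, teForm_apply, hx c hc, hy c hc, add_zero]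
  zero_mem' c _ := by simp [TE]
  smul_mem' a x hx c hc := by
    rw [TE_smul_left]
    exact hx _ (C.smul_mem _ hc)

variable {F} in
lemma mem_teOrthogonal {C : Submodule (MonoidAlgebra F G) (MonoidAlgebra K G)}
    {x : MonoidAlgebra K G} : x ∈ teOrthogonal F C ↔ ∀ c ∈ C, TE F x c = 0 :=
  Iff.rfl

lemma restrictScalars_teOrthogonal (C : Submodule (MonoidAlgebra F G) (MonoidAlgebra K G)) :
    (teOrthogonal F C).restrictScalars F = (teForm F).orthogonal (C.restrictScalars F) := by
  ext x
  simp [mem_teOrthogonal, LinearMap.BilinForm.mem_orthogonal_iff, TE_comm F x]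

lemma isCompl_teOrthogonal [FiniteDimensional F K]
    (C : Submodule (MonoidAlgebra F G) (MonoidAlgebra K G))
    (h : Disjoint C (teOrthogonal F C)) : IsCompl C (teOrthogonal F C) := by
  rw [← Submodule.isCompl_restrictScalars_iff F, restrictScalars_teOrthogonal]
  rw [← Submodule.disjoint_restrictScalars_iff F, restrictScalars_teOrthogonal] at h
  have hB : (teForm F : LinearMap.BilinForm F (MonoidAlgebra K G)).IsRefl :=
    (teForm_isSymm F).isRefl
  exact (LinearMap.BilinForm.restrict_nondegenerate_iff_isCompl_orthogonal hB).1
    ((teForm F).nondegenerate_restrict_of_disjoint_orthogonal hB h)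

end GroupAlgebraAction

theorem te_lcd_iff_selfadjoint_projector_general
    (F K G : Type) [Field F] [Fintype F] [Field K] [Algebra F K]
    [FiniteDimensional F K] [Group G] [Fintype G]
    (C : Submodule (MonoidAlgebra F G) (MonoidAlgebra K G)) :
    ((C : Set (MonoidAlgebra K G)) ∩ {x | ∀ c ∈ C, TE F x c = 0} = {0}) ↔
    (∃ P : MonoidAlgebra K G →ₗ[MonoidAlgebra F G] MonoidAlgebra K G,
        P ∘ₗ P = P ∧ LinearMap.range P = C ∧
        ∀ x y : MonoidAlgebra K G, TE F (P x) y = TE F x (P y)) := by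
  have hlcd : (C : Set (MonoidAlgebra K G)) ∩ {x | ∀ c ∈ C, TE F x c = 0} = {0} ↔
      Disjoint C (teOrthogonal F C) := by
    rw [disjoint_iff, ← SetLike.coe_set_eq (p := C ⊓ teOrthogonal F C), Submodule.coe_inf,
      Submodule.bot_coe]
    rfl
  rw [hlcd]
  constructor
  · intro h
    have hC := isCompl_teOrthogonal F C h
    refine ⟨C.projection _ hC, Submodule.isIdempotentElem_projection hC,
      Submodule.range_projection hC, ?_⟩
    exact (teForm F).apply_projection_left_eq_right (teForm_isSymm F) hC
      fun x hx y hy => (TE_comm F x y).trans (hy x hx)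
  · rintro ⟨P, hP, rfl, hadj⟩
    exact Submodule.disjoint_def.2 fun x hx hperp =>
      (teForm F).eq_zero_of_mem_range_of_orthogonal_range (teForm_separatingLeft F) hP hadj hx hperp

/-- A left `FG`-submodule `C` of `KG` is TE-LCD (`C ∩ C^⊥_TE = {0}`) if and only
if `C` is the image of an `FG`-linear projector on `KG` that is self-adjoint
with respect to the trace-Euclidean form. -/
theorem te_lcd_iff_selfadjoint_projector
    (F K G : Type) [Field F] [Fintype F] [Field K] [Fintype K] [Algebra F K]
    [FiniteDimensional F K] [Group G] [Fintype G]
    (C : Submodule (MonoidAlgebra F G) (MonoidAlgebra K G)) :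
    ((C : Set (MonoidAlgebra K G)) ∩ {x | ∀ c ∈ C, TE F x c = 0} = {0}) ↔
    (∃ P : MonoidAlgebra K G →ₗ[MonoidAlgebra F G] MonoidAlgebra K G,
        P ∘ₗ P = P ∧ LinearMap.range P = C ∧
        ∀ x y : MonoidAlgebra K G, TE F (P x) y = TE F x (P y)) :=
  te_lcd_iff_selfadjoint_projector_general F K G C
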